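/- Let u be subharmonic on the open disk of radius R₀ centered at the origin in ℝ², and suppose u(x,y) ≤ v₁(x,y) on the circle x²+y²=R₀², where v₁(r cos θ, r sin θ) = C r² |sin(2θ)| for some C > 0. If moreover u(x,0) ≤ 0 and u(0,y) ≤ 0 for |x|,|y| < R₀, then u(x,y) ≤ C(x²+y²) for all x²+y² < R₀². -/

import Mathlib

open MeasureTheory Metric Complex

def SubharmonicOn (u : ℂ → ℝ) (U : Set ℂ) : Prop :=
  UpperSemicontinuousOn u U ∧
    ∀ (c : ℂ) (r : ℝ), 0 < r → closedBall c r ⊆ U →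
      u c ≤ (2 * Real.pi)⁻¹ *
        ∫ θ in (0 : ℝ)..(2 * Real.pi), u (c + r * Complex.exp (θ * Complex.I))

/-!
Fix `z` off the axes and let `V` be the part of the open disk in the quadrant of `z`. On the
closure of `V` the function `v₁ = 2C|xy|` is a constant multiple of `xy = Re(-i w² / 2)`, so it
has the mean value property, and on the frontier of `V` (an arc of the circle and two radii on
the axes) `u ≤ v₁` by hypothesis. The maximum principle for `u - v₁`, proved by perturbing with
`ε |w|²`, gives `u ≤ v₁` on `V`, and `2|xy| ≤ x² + y²`.
-/

open Real Set

lemma SubharmonicOn.le_circleAverage {u : ℂ → ℝ} {U : Set ℂ} (hu : SubharmonicOn u U) {c : ℂ}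
    {r : ℝ} (hr : 0 < r) (hcr : closedBall c r ⊆ U) : u c ≤ circleAverage u c r :=
  hu.2 c r hr hcr

lemma circleAverage_re_of_differentiable {g : ℂ → ℂ} (hg : Differentiable ℂ g) (c : ℂ) (r : ℝ) :
    circleAverage (fun w ↦ (g w).re) c r = (g c).re := by
  rw [← hg.diffContOnCl.circleAverage]
  exact reCLM.circleAverage_comp_comm hg.continuous.continuousOn.circleIntegrable'

lemma circleAverage_re_mul_im (c : ℂ) (r : ℝ) :
    circleAverage (fun w ↦ w.re * w.im) c r = c.re * c.im := by
  have hre_mul_im (w : ℂ) : w.re * w.im = (-I / 2 * w ^ 2).re := by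
    simp only [sq, mul_re, mul_im, div_ofNat_re, div_ofNat_im, neg_re, neg_im, I_re, I_im]
    ring
  simp only [hre_mul_im]
  exact circleAverage_re_of_differentiable (by fun_prop) c r

lemma circleAverage_norm_sq (c : ℂ) (r : ℝ) :
    circleAverage (fun w ↦ ‖w‖ ^ 2) c r = ‖c‖ ^ 2 + r ^ 2 := by
  -- on the circle, `‖w‖² = ‖w - c‖² + 2 Re (c̄ w) - ‖c‖²` with `‖w - c‖ = |r|`
  have hsphere : EqOn (fun w ↦ ‖w‖ ^ 2)
      (fun w ↦ (2 * (starRingEnd ℂ) c * w + (r ^ 2 - ‖c‖ ^ 2 : ℝ)).re) (sphere c |r|) := by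
    intro w hw
    have hwc : ‖w - c‖ ^ 2 = r ^ 2 := by rw [mem_sphere_iff_norm.1 hw, sq_abs]
    simp only [← normSq_eq_norm_sq] at hwc ⊢
    simp only [normSq_apply, sub_re, sub_im, add_re, mul_re, mul_im, ofReal_re, conj_re,
      conj_im, re_ofNat, im_ofNat] at hwc ⊢
    linarith
  rw [circleAverage_congr_sphere hsphere, circleAverage_re_of_differentiable (by fun_prop)]
  simp only [← normSq_eq_norm_sq, normSq_apply, add_re, mul_re, mul_im, ofReal_re, conj_re,
    conj_im, re_ofNat, im_ofNat]
  ring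

lemma circleAverage_sub_mul_norm_sq_lt {h : ℂ → ℝ} {c : ℂ} {r ε : ℝ}
    (hh : ContinuousOn h (sphere c |r|)) (hh_mean : circleAverage h c r = h c) (hε : 0 < ε)
    (hr : r ≠ 0) : circleAverage (fun w ↦ h w - ε * ‖w‖ ^ 2) c r < h c - ε * ‖c‖ ^ 2 := by
  have hq : circleAverage (fun w ↦ ε * ‖w‖ ^ 2) c r = ε * (‖c‖ ^ 2 + r ^ 2) := by
    rw [← circleAverage_norm_sq]
    exact circleAverage_fun_smul (a := ε) (f := fun w ↦ ‖w‖ ^ 2)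
  rw [circleAverage_fun_sub hh.circleIntegrable' (by fun_prop), hh_mean, hq]
  nlinarith [mul_pos hε (pow_pos (abs_pos.2 hr) 2), sq_abs r]

lemma not_circleIntegrable_of_isMaxOn_sub {u g : ℂ → ℝ} {c : ℂ} {r : ℝ}
    (hu : u c ≤ circleAverage u c r) (hg : ContinuousOn g (sphere c |r|))
    (hgc : circleAverage g c r < g c) (hmax : IsMaxOn (u - g) (sphere c |r|) c) :
    ¬CircleIntegrable u c r := by
  intro hint
  have hle : circleAverage u c r ≤ circleAverage (fun w ↦ (u c - g c) + g w) c r :=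
    circleAverage_mono hint (circleIntegrable_const _ _ _ |>.add hg.circleIntegrable') fun w hw ↦ by
      have := hmax hw
      simp only [mem_ofPred_eq, Pi.sub_apply] at this
      linarith
  rw [circleAverage_fun_add (circleIntegrable_const _ _ _) hg.circleIntegrable',
    circleAverage_const] at hle
  linarith

theorem SubharmonicOn.le_of_le_on_frontier {u h : ℂ → ℝ} {U V : Set ℂ} (hu : SubharmonicOn u U)
    (hVo : IsOpen V) (hVb : Bornology.IsBounded V) (hVU : closure V ⊆ U) (hh : Continuous h)
    (hh_mean : ∀ c r, circleAverage h c r = h c) (hh_nonneg : ∀ z ∈ closure V, 0 ≤ h z)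
    (hle : ∀ z ∈ frontier V, u z ≤ h z) {z : ℂ} (hz : z ∈ V) : u z ≤ h z := by
  obtain ⟨R, hR⟩ := hVb.subset_closedBall 0
  have hclR : closure V ⊆ closedBall 0 R := closure_minimal hR isClosed_closedBall
  have hnorm_sq {w : ℂ} (hw : w ∈ closure V) : ‖w‖ ^ 2 ≤ R ^ 2 :=
    pow_le_pow_left₀ (norm_nonneg w) (mem_closedBall_zero_iff.1 (hclR hw)) 2
  -- `ε ‖w‖²` has circle averages strictly above its central values, which rules out interior maxima
  have hperturbed : ∀ ε > 0, u z ≤ h z + ε * R ^ 2 := by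
    intro ε hε
    set g : ℂ → ℝ := fun w ↦ h w - ε * ‖w‖ ^ 2
    have hg : Continuous g := by fun_prop
    have husc : UpperSemicontinuousOn (u - g) (closure V) := by
      rw [sub_eq_add_neg]
      exact (hu.1.mono hVU).add hg.neg.continuousOn.upperSemicontinuousOn
    obtain ⟨c, hcV, hmax⟩ := husc.exists_isMaxOn ⟨z, subset_closure hz⟩ hVb.isCompact_closure
    have hc : u c ≤ h c := by
      by_cases hc : c ∈ V
      · obtain ⟨r, hr, hcr⟩ := nhds_basis_closedBall.mem_iff.1 (hVo.mem_nhds hc)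
        have hu_c := hu.le_circleAverage hr (hcr.trans (subset_closure.trans hVU))
        have hg_c : circleAverage g c r < g c :=
          circleAverage_sub_mul_norm_sq_lt hh.continuousOn (hh_mean c r) hε hr.ne'
        have hsphere : sphere c |r| ⊆ closure V := by
          rw [abs_of_pos hr]
          exact sphere_subset_closedBall.trans (hcr.trans subset_closure)
        have := not_circleIntegrable_of_isMaxOn_sub hu_c hg.continuousOn hg_c
          (hmax.on_subset hsphere)
        -- the average of a function that is not circle integrable is `0`
        rw [circleAverage.integral_undef this] at hu_c
        exact hu_c.trans (hh_nonneg c hcV)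
      · exact hle c (hVo.frontier_eq ▸ ⟨hcV, hc⟩)
    have hz_le := hmax (subset_closure hz)
    simp only [mem_ofPred_eq, Pi.sub_apply, g] at hz_le
    nlinarith [hnorm_sq hcV, norm_nonneg z]
  refine le_of_forall_pos_le_add fun δ hδ ↦ (hperturbed (δ / (R ^ 2 + 1)) (by positivity)).trans ?_
  gcongr
  rw [div_mul_eq_mul_div, div_le_iff₀ (by positivity)]
  nlinarith

lemma le_zero_of_re_mul_im_eq_zero {u : ℂ → ℝ} {R : ℝ}
    (hx : ∀ x : ℝ, |x| < R → u (x : ℂ) ≤ 0)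
    (hy : ∀ y : ℝ, |y| < R → u ((y : ℂ) * Complex.I) ≤ 0) {w : ℂ} (hw : ‖w‖ < R)
    (hw0 : w.re * w.im = 0) : u w ≤ 0 := by
  rcases mul_eq_zero.1 hw0 with hre | him
  · have hw_eq : w = (w.im : ℂ) * I := Complex.ext (by simp [hre]) (by simp)
    exact hw_eq ▸ hy w.im ((abs_im_le_norm w).trans_lt hw)
  · have hw_eq : w = (w.re : ℂ) := Complex.ext (by simp) (by simp [him])
    exact hw_eq ▸ hx w.re ((abs_re_le_norm w).trans_lt hw)

lemma abs_re_mul_im_eq_of_nonneg {w z : ℂ} (hz : z.re * z.im ≠ 0) (hre : 0 ≤ w.re * z.re)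
    (him : 0 ≤ w.im * z.im) :
    |w.re * w.im| = z.re * z.im / |z.re * z.im| * (w.re * w.im) := by
  rw [div_mul_eq_mul_div, eq_div_iff (abs_pos.2 hz).ne', ← abs_mul,
    abs_of_nonneg (by nlinarith [mul_nonneg hre him])]
  ring

lemma closure_ball_inter_quadrant_subset (R : ℝ) (z : ℂ) :
    closure (ball (0 : ℂ) R ∩ {w | 0 < w.re * z.re} ∩ {w | 0 < w.im * z.im}) ⊆
      closedBall 0 R ∩ {w | 0 ≤ w.re * z.re} ∩ {w | 0 ≤ w.im * z.im} :=
  closure_minimal (by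
    rintro w ⟨⟨hwR, hre⟩, him⟩
    simp only [mem_inter_iff, mem_ofPred_eq] at hre him ⊢
    exact ⟨⟨ball_subset_closedBall hwR, hre.le⟩, him.le⟩)
    ((isClosed_closedBall.inter (isClosed_le continuous_const (by fun_prop))).inter
      (isClosed_le continuous_const (by fun_prop)))

theorem SubharmonicOn.le_two_mul_abs_re_mul_im {u : ℂ → ℝ} {U : Set ℂ} {R C : ℝ}
    (hu : SubharmonicOn u U) (hC : 0 ≤ C) (hUR : closedBall 0 R ⊆ U)
    (hbd : ∀ z : ℂ, ‖z‖ = R → u z ≤ 2 * C * |z.re * z.im|)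
    (haxes : ∀ w : ℂ, ‖w‖ < R → w.re * w.im = 0 → u w ≤ 0) {z : ℂ} (hz : ‖z‖ < R) :
    u z ≤ 2 * C * |z.re * z.im| := by
  by_cases hz0 : z.re * z.im = 0
  · exact (haxes z hz hz0).trans (by positivity)
  set V : Set ℂ := ball 0 R ∩ {w | 0 < w.re * z.re} ∩ {w | 0 < w.im * z.im}
  set h : ℂ → ℝ := fun w ↦ 2 * C * (z.re * z.im / |z.re * z.im|) * (w.re * w.im)
  have hVo : IsOpen V :=
    (isOpen_ball.inter (isOpen_lt continuous_const (by fun_prop))).inter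
      (isOpen_lt continuous_const (by fun_prop))
  have hclV := closure_ball_inter_quadrant_subset R z
  have hh_abs {w : ℂ} (hw : w ∈ closure V) : h w = 2 * C * |w.re * w.im| := by
    obtain ⟨⟨-, hre⟩, him⟩ := hclV hw
    simp only [mem_ofPred_eq] at hre him
    rw [abs_re_mul_im_eq_of_nonneg hz0 hre him, ← mul_assoc]
  have hh_mean (c : ℂ) (r : ℝ) : circleAverage h c r = h c := by
    calc circleAverage h c r
        = 2 * C * (z.re * z.im / |z.re * z.im|) * circleAverage (fun w ↦ w.re * w.im) c r :=
          circleAverage_fun_smul (a := 2 * C * (z.re * z.im / |z.re * z.im|))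
            (f := fun w ↦ w.re * w.im)
      _ = h c := by rw [circleAverage_re_mul_im]
  have hle : ∀ w ∈ frontier V, u w ≤ h w := by
    rw [hVo.frontier_eq]
    rintro w ⟨hw, hwV⟩
    rw [hh_abs hw]
    obtain ⟨⟨hwR, hre⟩, him⟩ := hclV hw
    simp only [mem_ofPred_eq] at hre him
    rcases (mem_closedBall_zero_iff.1 hwR).eq_or_lt with hwR | hwR
    · exact hbd w hwR
    -- off the circle, the frontier of `V` lies on the axes
    have hprod : (w.re * z.re) * (w.im * z.im) = 0 := by
      by_contra hne
      refine hwV ⟨⟨mem_ball_zero_iff.2 hwR, ?_⟩, ?_⟩ <;> simp only [mem_ofPred_eq]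
      · exact hre.lt_of_ne (Ne.symm (left_ne_zero_of_mul hne))
      · exact him.lt_of_ne (Ne.symm (right_ne_zero_of_mul hne))
    have hw0 : w.re * w.im = 0 :=
      (mul_eq_zero.1 (by linear_combination hprod)).resolve_right hz0
    simpa [hw0] using haxes w hwR hw0
  have hzV : z ∈ V := by
    simp only [V, mem_inter_iff, mem_ball_zero_iff, mem_ofPred_eq, mul_self_pos]
    exact ⟨⟨hz, left_ne_zero_of_mul hz0⟩, right_ne_zero_of_mul hz0⟩
  calc u z ≤ h z := hu.le_of_le_on_frontier hVo
        (isBounded_ball.subset (inter_subset_left.trans inter_subset_left))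
        (hclV.trans (inter_subset_left.trans (inter_subset_left.trans hUR))) (by fun_prop)
        hh_mean (fun w hw ↦ (hh_abs hw).symm ▸ by positivity) hle hzV
    _ = 2 * C * |z.re * z.im| := hh_abs (subset_closure hzV)

theorem subharmonic_quadratic_bound_general (R₀ C : ℝ) (hC : 0 < C)
    (U : Set ℂ) (hUR : closedBall 0 R₀ ⊆ U)
    (u : ℂ → ℝ) (hsub : SubharmonicOn u U)
    (hbd : ∀ z : ℂ, ‖z‖ = R₀ → u z ≤ 2 * C * |z.re * z.im|)
    (hx : ∀ x : ℝ, |x| < R₀ → u (x : ℂ) ≤ 0)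
    (hy : ∀ y : ℝ, |y| < R₀ → u ((y : ℂ) * Complex.I) ≤ 0) :
    ∀ z : ℂ, ‖z‖ < R₀ → u z ≤ C * (z.re ^ 2 + z.im ^ 2) := by
  intro z hz
  calc u z ≤ 2 * C * |z.re * z.im| :=
        hsub.le_two_mul_abs_re_mul_im hC.le hUR hbd
          (fun _ hw hw0 ↦ le_zero_of_re_mul_im_eq_zero hx hy hw hw0) hz
    _ = C * (2 * |z.re| * |z.im|) := by rw [abs_mul]; ring
    _ ≤ C * (|z.re| ^ 2 + |z.im| ^ 2) := by gcongr; exact two_mul_le_add_sq _ _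
    _ = C * (z.re ^ 2 + z.im ^ 2) := by rw [sq_abs, sq_abs]

/-- If `u` is subharmonic on a neighborhood of the closed disk of radius `R₀`,
`u ≤ v₁` on the circle of radius `R₀` (where `v₁(x,y) = 2C|xy| = C r²|sin 2θ|`, `C > 0`),
and `u ≤ 0` on both coordinate axes inside the disk, then `u(x,y) ≤ C(x²+y²)`
throughout the open disk. -/
theorem subharmonic_quadratic_bound (R₀ C : ℝ) (hR₀ : 0 < R₀) (hC : 0 < C)
    (U : Set ℂ) (hU : IsOpen U) (hUR : closedBall 0 R₀ ⊆ U)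
    (u : ℂ → ℝ) (hsub : SubharmonicOn u U)
    (hbd : ∀ z : ℂ, ‖z‖ = R₀ → u z ≤ 2 * C * |z.re * z.im|)
    (hx : ∀ x : ℝ, |x| < R₀ → u (x : ℂ) ≤ 0)
    (hy : ∀ y : ℝ, |y| < R₀ → u ((y : ℂ) * Complex.I) ≤ 0) :
    ∀ z : ℂ, ‖z‖ < R₀ → u z ≤ C * (z.re ^ 2 + z.im ^ 2) :=
  subharmonic_quadratic_bound_general R₀ C hC U hUR u hsub hbd hx hy
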